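/- arXiv:2004.03288 — 3 statements merged into one kernel-verified Lean document; each statement's English description precedes it below -/
import Mathlib

section
/- Let L ∈ ℝ^{2n×2} have linearly independent columns L₁, L₂. For an upper triangular parameter matrix D = [[c, f],[0, c⁻¹]] with c ≠ 0, the function (c, f) ↦ ‖L Dᵀ‖_F² = c²‖L₁‖₂² + 2cf·L₁ᵀL₂ + f²‖L₂‖₂² + ‖L₂‖₂²/c² attains its global minimum value 2√(det(LᵀL)) at ĉ = ‖L₂‖₂ / (det(LᵀL))^{1/4} and f̂ = −(L₁ᵀL₂) / (‖L₂‖₂ · (det(LᵀL))^{1/4}). -/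
/-!
`‖L Dᵀ‖_F²` is the trace of the Gram matrix `D (LᵀL) Dᵀ`, whose determinant is `det (LᵀL)`
because `det D = 1`. For a positive semidefinite `2 × 2` matrix, AM–GM on the diagonal gives
`trace ≥ 2 √det`, so `2 √det (LᵀL)` is a lower bound; at `(ĉ, f̂)` the Gram matrix is the scalar
matrix `√det (LᵀL) • 1`, where the bound is attained.
-/

open Matrix

noncomputable def euclNorm {m : ℕ} (v : Fin m → ℝ) : ℝ := Real.sqrt (∑ i, v i ^ 2)

noncomputable def frob {m n : ℕ} (A : Matrix (Fin m) (Fin n) ℝ) : ℝ :=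
  Real.sqrt (∑ i, ∑ j, A i j ^ 2)

noncomputable def specNorm {m n : ℕ} (A : Matrix (Fin m) (Fin n) ℝ) : ℝ :=
  ‖(Matrix.toEuclideanLin A).toContinuousLinearMap‖

noncomputable def sigmaMax (B : Matrix (Fin 2) (Fin 2) ℝ) : ℝ :=
  Real.sqrt (max ((Matrix.isHermitian_conjTranspose_mul_self B).eigenvalues 0)
                 ((Matrix.isHermitian_conjTranspose_mul_self B).eigenvalues 1))

noncomputable def sigmaMin (B : Matrix (Fin 2) (Fin 2) ℝ) : ℝ :=
  Real.sqrt (min ((Matrix.isHermitian_conjTranspose_mul_self B).eigenvalues 0)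
                 ((Matrix.isHermitian_conjTranspose_mul_self B).eigenvalues 1))

lemma euclNorm_sq {m : ℕ} (v : Fin m → ℝ) : euclNorm v ^ 2 = ∑ i, v i ^ 2 :=
  Real.sq_sqrt (Finset.sum_nonneg fun i _ => sq_nonneg (v i))

lemma frob_sq {m n : ℕ} (M : Matrix (Fin m) (Fin n) ℝ) : frob M ^ 2 = ∑ i, ∑ j, M i j ^ 2 :=
  Real.sq_sqrt (Finset.sum_nonneg fun i _ => Finset.sum_nonneg fun j _ => sq_nonneg (M i j))

lemma frob_sq_eq_trace {m n : ℕ} (M : Matrix (Fin m) (Fin n) ℝ) :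
    frob M ^ 2 = (Mᵀ * M).trace := by
  rw [frob_sq, Finset.sum_comm]
  simp only [trace, diag, mul_apply, transpose_apply, sq]

lemma Matrix.PosSemidef.two_sqrt_det_le_trace {G : Matrix (Fin 2) (Fin 2) ℝ}
    (hG : G.PosSemidef) : 2 * √G.det ≤ G.trace := by
  have h00 : 0 ≤ G 0 0 := hG.diag_nonneg
  have h11 : 0 ≤ G 1 1 := hG.diag_nonneg
  have hsymm : G 1 0 = G 0 1 := by simpa using congr_fun₂ hG.isHermitian.eq 0 1
  have hdet : G.det ≤ ((G 0 0 + G 1 1) / 2) ^ 2 := by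
    rw [det_fin_two, hsymm]
    nlinarith [sq_nonneg (G 0 0 - G 1 1), sq_nonneg (G 0 1)]
  rw [trace_fin_two]
  linarith [(Real.sqrt_le_sqrt hdet).trans_eq (Real.sqrt_sq (by positivity))]

lemma posSemidef_transpose_mul_self {m n : Type*} [Fintype m] [Finite n] (M : Matrix m n ℝ) :
    (Mᵀ * M).PosSemidef := by
  simpa using posSemidef_conjTranspose_mul_self M

lemma two_sqrt_det_gram_le_frob_sq {m : ℕ} (M : Matrix (Fin m) (Fin 2) ℝ) :
    2 * √(Mᵀ * M).det ≤ frob M ^ 2 :=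
  frob_sq_eq_trace M ▸ (posSemidef_transpose_mul_self M).two_sqrt_det_le_trace

lemma det_gram_mul_transpose {m n : Type*} [Fintype m] [Fintype n] [DecidableEq n]
    (L : Matrix m n ℝ) (D : Matrix n n ℝ) :
    ((L * Dᵀ)ᵀ * (L * Dᵀ)).det = D.det ^ 2 * (Lᵀ * L).det := by
  rw [transpose_mul, transpose_transpose, Matrix.mul_assoc, ← Matrix.mul_assoc Lᵀ,
    det_mul, det_mul, det_transpose]
  ring

lemma det_transpose_mul_self_fin_two {m : ℕ} (L : Matrix (Fin m) (Fin 2) ℝ) :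
    (Lᵀ * L).det = euclNorm (fun i => L i 0) ^ 2 * euclNorm (fun i => L i 1) ^ 2
      - (∑ i, L i 0 * L i 1) ^ 2 := by
  rw [euclNorm_sq, euclNorm_sq]
  simp only [det_fin_two, mul_apply, transpose_apply, sq, mul_comm (L _ 1) (L _ 0)]

lemma frob_sq_mul_scaling {m : ℕ} (L : Matrix (Fin m) (Fin 2) ℝ) (c f : ℝ) :
    frob (L * (!![c, f; 0, c⁻¹] : Matrix (Fin 2) (Fin 2) ℝ)ᵀ) ^ 2 =
      c ^ 2 * euclNorm (fun i => L i 0) ^ 2 + 2 * c * f * (∑ i, L i 0 * L i 1)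
        + f ^ 2 * euclNorm (fun i => L i 1) ^ 2 + euclNorm (fun i => L i 1) ^ 2 / c ^ 2 := by
  simp only [frob_sq, euclNorm_sq, Finset.mul_sum, Finset.sum_div, ← Finset.sum_add_distrib]
  refine Finset.sum_congr rfl fun i _ => ?_
  simp [Fin.sum_univ_two, mul_apply]
  ring

lemma frob_sq_mul_optimal_scaling {m : ℕ} (L : Matrix (Fin m) (Fin 2) ℝ) :
    frob (L * (!![euclNorm (fun i => L i 1) / √√(Lᵀ * L).det,
        -(∑ i, L i 0 * L i 1) / (euclNorm (fun i => L i 1) * √√(Lᵀ * L).det);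
        0, (euclNorm (fun i => L i 1) / √√(Lᵀ * L).det)⁻¹] : Matrix (Fin 2) (Fin 2) ℝ)ᵀ) ^ 2 =
      2 * √(Lᵀ * L).det := by
  rcases (posSemidef_transpose_mul_self L).det_nonneg.eq_or_lt with hzero | hpos
  · -- junk values: `ĉ = E / 0 = 0` and `f̂ = 0`, so both sides vanish
    simp [← hzero, frob, mul_apply]
  have hS4 : (√√(Lᵀ * L).det ^ 2) ^ 2 = euclNorm (fun i => L i 0) ^ 2 *
      euclNorm (fun i => L i 1) ^ 2 - (∑ i, L i 0 * L i 1) ^ 2 := by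
    rw [Real.sq_sqrt (Real.sqrt_nonneg _), Real.sq_sqrt hpos.le, det_transpose_mul_self_fin_two]
  have hS2 : √(Lᵀ * L).det = √√(Lᵀ * L).det ^ 2 := (Real.sq_sqrt (Real.sqrt_nonneg _)).symm
  have hS : 0 < √√(Lᵀ * L).det := by positivity
  rw [frob_sq_mul_scaling]
  generalize √√(Lᵀ * L).det = S at hS hS2 hS4 ⊢
  rw [hS2]
  generalize euclNorm (fun i => L i 1) = E at hS4 ⊢
  have hE : E ≠ 0 := by
    rintro rfl
    nlinarith [sq_nonneg (∑ i, L i 0 * L i 1), pow_pos hS 4]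
  field_simp
  linear_combination -hS4

theorem optimal_block_scaling_min_general {n : ℕ} (L : Matrix (Fin (2*n)) (Fin 2) ℝ)
    (cop fop : ℝ)
    (hc : cop = euclNorm (fun i => L i 1) / Real.sqrt (Real.sqrt (Lᵀ * L).det))
    (hf : fop = -(∑ i, L i 0 * L i 1) /
        (euclNorm (fun i => L i 1) * Real.sqrt (Real.sqrt (Lᵀ * L).det))) :
    (∀ c f : ℝ, c ≠ 0 →
      frob (L * (!![c, f; 0, c⁻¹] : Matrix (Fin 2) (Fin 2) ℝ)ᵀ) ^ 2 =
        c ^ 2 * euclNorm (fun i => L i 0) ^ 2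
          + 2 * c * f * (∑ i, L i 0 * L i 1)
          + f ^ 2 * euclNorm (fun i => L i 1) ^ 2
          + euclNorm (fun i => L i 1) ^ 2 / c ^ 2) ∧
    frob (L * (!![cop, fop; 0, cop⁻¹] : Matrix (Fin 2) (Fin 2) ℝ)ᵀ) ^ 2 =
      2 * Real.sqrt (Lᵀ * L).det ∧
    (∀ c f : ℝ, c ≠ 0 →
      2 * Real.sqrt (Lᵀ * L).det ≤
        frob (L * (!![c, f; 0, c⁻¹] : Matrix (Fin 2) (Fin 2) ℝ)ᵀ) ^ 2) := by
  refine ⟨fun c f _ => frob_sq_mul_scaling L c f, hc ▸ hf ▸ frob_sq_mul_optimal_scaling L,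
    fun c f hc0 => ?_⟩
  have hD : (!![c, f; 0, c⁻¹] : Matrix (Fin 2) (Fin 2) ℝ).det = 1 := by
    simp [det_fin_two_of, hc0]
  have := two_sqrt_det_gram_le_frob_sq (L * !![c, f; 0, c⁻¹]ᵀ)
  rwa [det_gram_mul_transpose, hD, one_pow, one_mul] at this

theorem optimal_block_scaling_min {n : ℕ} (L : Matrix (Fin (2*n)) (Fin 2) ℝ)
    (hLI : LinearIndependent ℝ ![fun i => L i 0, fun i => L i 1])
    (cop fop : ℝ)
    (hc : cop = euclNorm (fun i => L i 1) / Real.sqrt (Real.sqrt (Lᵀ * L).det))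
    (hf : fop = -(∑ i, L i 0 * L i 1) /
        (euclNorm (fun i => L i 1) * Real.sqrt (Real.sqrt (Lᵀ * L).det))) :
    (∀ c f : ℝ, c ≠ 0 →
      frob (L * (!![c, f; 0, c⁻¹] : Matrix (Fin 2) (Fin 2) ℝ)ᵀ) ^ 2 =
        c ^ 2 * euclNorm (fun i => L i 0) ^ 2
          + 2 * c * f * (∑ i, L i 0 * L i 1)
          + f ^ 2 * euclNorm (fun i => L i 1) ^ 2
          + euclNorm (fun i => L i 1) ^ 2 / c ^ 2) ∧
    frob (L * (!![cop, fop; 0, cop⁻¹] : Matrix (Fin 2) (Fin 2) ℝ)ᵀ) ^ 2 =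
      2 * Real.sqrt (Lᵀ * L).det ∧
    (∀ c f : ℝ, c ≠ 0 →
      2 * Real.sqrt (Lᵀ * L).det ≤
        frob (L * (!![c, f; 0, c⁻¹] : Matrix (Fin 2) (Fin 2) ℝ)ᵀ) ^ 2) :=
  optimal_block_scaling_min_general L cop fop hc hf
end

section
/- Let β ≥ β_j > 0 and consider D̂ = [[ĉ, f̂],[0, ĉ⁻¹]] (the Frobenius-optimal scaling, with parameters determined by L and β_j = (det LᵀL)^{1/4}) and D̃ = [[c̃, f̃],[0, c̃⁻¹]] (the equal-row-norm scaling for target norm β). Then D̂ D̃⁻¹ = [[β/β_j, ±√(β⁴−β_j⁴)/(β β_j)],[0, β_j/β]] and its squared spectral norm equals ‖D̂ D̃⁻¹‖₂² = (β² + √(β⁴ − β_j⁴)) / β_j². -/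
/-! Both scalings are upper triangular with reciprocal diagonal entries, so `D̂ D̃⁻¹` is again of
this form, and the data of `L` cancel from its entries. The squared spectral norm of a `2 × 2`
matrix `B` is the larger eigenvalue `μ` of `Bᵀ B`: the form `μ ‖x‖² - ‖B x‖²` is positive
semidefinite and vanishes at some `x ≠ 0`. For `D̂ D̃⁻¹` both columns have squared norm `β² / βj²`
and the off-diagonal Gram entry is `∓√(β⁴ - βj⁴) / βj²`, whence `μ = (β² + √(β⁴ - βj⁴)) / βj²`. -/

open Matrix

noncomputable def enorm2 {m : ℕ} (v : Fin m → ℝ) : ℝ := Real.sqrt (∑ i, v i ^ 2)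

theorem ContinuousLinearMap.opNorm_sq_eq_of_le_of_eq {E F : Type*} [NormedAddCommGroup E]
    [NormedSpace ℝ E] [NormedAddCommGroup F] [NormedSpace ℝ F] (T : E →L[ℝ] F) {μ : ℝ}
    (hle : ∀ x, ‖T x‖ ^ 2 ≤ μ * ‖x‖ ^ 2) {v : E} (hv : v ≠ 0)
    (heq : ‖T v‖ ^ 2 = μ * ‖v‖ ^ 2) : ‖T‖ ^ 2 = μ := by
  have hv' : 0 < ‖v‖ := norm_pos_iff.2 hv
  have hμ : 0 ≤ μ := by
    have : 0 ≤ μ * ‖v‖ ^ 2 := heq ▸ sq_nonneg _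
    exact nonneg_of_mul_nonneg_left this (by positivity)
  have hnorm : ∀ x, ‖T x‖ ≤ √μ * ‖x‖ := fun x ↦ by
    rw [← Real.sqrt_sq (norm_nonneg x), ← Real.sqrt_mul hμ]
    exact Real.le_sqrt_of_sq_le (hle x)
  have hattained : ‖T v‖ = √μ * ‖v‖ := by
    rw [← Real.sqrt_sq (norm_nonneg v), ← Real.sqrt_mul hμ, ← heq, Real.sqrt_sq (norm_nonneg _)]
  have : ‖T‖ = √μ := le_antisymm (T.opNorm_le_bound (Real.sqrt_nonneg μ) hnorm)
    (le_of_mul_le_mul_right (hattained ▸ T.le_opNorm v) hv')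
  rw [this, Real.sq_sqrt hμ]

theorem quadratic_nonneg_of_sq_le_mul {a b c : ℝ} (ha : 0 ≤ a) (hc : 0 ≤ c) (hb : b ^ 2 ≤ a * c)
    (x y : ℝ) : 0 ≤ a * x ^ 2 + 2 * b * x * y + c * y ^ 2 := by
  rcases ha.eq_or_lt with rfl | ha
  · have hb : b ^ 2 = 0 := le_antisymm (by simpa using hb) (sq_nonneg b)
    obtain rfl := pow_eq_zero_iff two_ne_zero |>.1 hb
    nlinarith [mul_nonneg hc (sq_nonneg y)]
  · have : 0 ≤ a * (a * x ^ 2 + 2 * b * x * y + c * y ^ 2) := by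
      nlinarith [sq_nonneg (a * x + b * y), mul_nonneg (sub_nonneg.2 hb) (sq_nonneg y)]
    exact nonneg_of_mul_nonneg_right this ha

theorem exists_ne_zero_quadratic_eq_zero {a b c : ℝ} (hb : b ^ 2 = a * c) :
    ∃ x y : ℝ, (x, y) ≠ 0 ∧ a * x ^ 2 + 2 * b * x * y + c * y ^ 2 = 0 := by
  by_cases h : (-b, a) = (0 : ℝ × ℝ)
  · obtain ⟨-, rfl⟩ := Prod.mk_eq_zero.1 h
    exact ⟨1, 0, by simp, by ring⟩
  · exact ⟨-b, a, h, by linear_combination (-a) * hb⟩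

theorem norm_sq_toEuclideanLin_fin_two (B : Matrix (Fin 2) (Fin 2) ℝ)
    (x : EuclideanSpace ℝ (Fin 2)) :
    ‖toEuclideanLin B x‖ ^ 2 =
      (B 0 0 * x 0 + B 0 1 * x 1) ^ 2 + (B 1 0 * x 0 + B 1 1 * x 1) ^ 2 := by
  simp [EuclideanSpace.real_norm_sq_eq, Fin.sum_univ_two, Matrix.mulVec, dotProduct]

theorem specNorm_sq_fin_two (B : Matrix (Fin 2) (Fin 2) ℝ) {μ : ℝ}
    (hp : B 0 0 ^ 2 + B 1 0 ^ 2 ≤ μ) (hr : B 0 1 ^ 2 + B 1 1 ^ 2 ≤ μ)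
    (hdet : (μ - (B 0 0 ^ 2 + B 1 0 ^ 2)) * (μ - (B 0 1 ^ 2 + B 1 1 ^ 2)) =
      (B 0 0 * B 0 1 + B 1 0 * B 1 1) ^ 2) :
    specNorm B ^ 2 = μ := by
  set T := (toEuclideanLin B).toContinuousLinearMap
  -- `μ ‖x‖² - ‖B x‖²` is the quadratic form of `μ - Bᵀ B`, which the hypotheses make
  -- positive semidefinite and singular
  have hdefect : ∀ x : EuclideanSpace ℝ (Fin 2), μ * ‖x‖ ^ 2 - ‖T x‖ ^ 2 =
      (μ - (B 0 0 ^ 2 + B 1 0 ^ 2)) * x 0 ^ 2 + 2 * -(B 0 0 * B 0 1 + B 1 0 * B 1 1) * x 0 * x 1 +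
        (μ - (B 0 1 ^ 2 + B 1 1 ^ 2)) * x 1 ^ 2 := fun x ↦ by
    rw [LinearMap.coe_toContinuousLinearMap', norm_sq_toEuclideanLin_fin_two,
      EuclideanSpace.real_norm_sq_eq, Fin.sum_univ_two]
    ring
  obtain ⟨x, y, hxy, hzero⟩ := exists_ne_zero_quadratic_eq_zero (by rw [neg_sq, hdet])
  refine T.opNorm_sq_eq_of_le_of_eq (fun v ↦ sub_nonneg.1 ?_) (v := !₂[x, y]) ?_
    (sub_eq_zero.1 ?_).symm
  · rw [hdefect]
    exact quadratic_nonneg_of_sq_le_mul (sub_nonneg.2 hp) (sub_nonneg.2 hr) (by rw [neg_sq, hdet]) _ _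
  · simpa [funext_iff, Fin.forall_fin_two] using hxy
  · rw [hdefect]; simpa using hzero

theorem enorm2_pos {m : ℕ} {v : Fin m → ℝ} (hv : v ≠ 0) : 0 < enorm2 v := by
  obtain ⟨i, hi⟩ := Function.ne_iff.1 hv
  exact Real.sqrt_pos.2 <|
    Finset.sum_pos' (fun j _ ↦ sq_nonneg (v j)) ⟨i, Finset.mem_univ i, sq_pos_of_ne_zero hi⟩

theorem inv_upperTriangular_fin_two {c : ℝ} (hc : c ≠ 0) (f : ℝ) :
    (!![c, f; 0, c⁻¹] : Matrix (Fin 2) (Fin 2) ℝ)⁻¹ = !![c⁻¹, -f; 0, c] := by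
  refine Matrix.inv_eq_right_inv ?_
  rw [Matrix.mul_fin_two, Matrix.one_fin_two]
  simp [hc, mul_comm]

theorem upperTriangular_mul_inv_fin_two {c : ℝ} (hc : c ≠ 0) (a b d : ℝ) :
    (!![a, b; 0, a⁻¹] : Matrix (Fin 2) (Fin 2) ℝ) * !![c, d; 0, c⁻¹]⁻¹ =
      !![a / c, b * c - a * d; 0, c / a] := by
  rw [inv_upperTriangular_fin_two hc, Matrix.mul_fin_two]
  simp only [EmbeddingLike.apply_eq_iff_eq, Matrix.vecCons_inj, and_true]
  exact ⟨⟨by ring, by ring⟩, by ring, by ring⟩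

theorem specNorm_sq_upperTriangular_of_sq_eq {βj β : ℝ} (hβj : βj ≠ 0) (hβ : β ≠ 0) {t : ℝ}
    (ht : t ^ 2 = β ^ 4 - βj ^ 4) :
    specNorm !![β / βj, t / (β * βj); 0, βj / β] ^ 2 = (β ^ 2 + √(β ^ 4 - βj ^ 4)) / βj ^ 2 := by
  set s := √(β ^ 4 - βj ^ 4)
  have hs : s ^ 2 = t ^ 2 := by rw [Real.sq_sqrt (ht ▸ sq_nonneg t), ht]
  have hcol₀ : (β / βj) ^ 2 + 0 ^ 2 = β ^ 2 / βj ^ 2 := by ring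
  have hcol₁ : (t / (β * βj)) ^ 2 + (βj / β) ^ 2 = β ^ 2 / βj ^ 2 := by
    rw [div_pow, ht]
    field_simp
    ring
  have hgram : β / βj * (t / (β * βj)) + 0 * (βj / β) = t / βj ^ 2 := by
    field_simp
    ring
  have hgap : (β ^ 2 + s) / βj ^ 2 - β ^ 2 / βj ^ 2 = s / βj ^ 2 := by ring
  have hβs : β ^ 2 / βj ^ 2 ≤ (β ^ 2 + s) / βj ^ 2 := by
    gcongr
    exact le_add_of_nonneg_right (Real.sqrt_nonneg _)
  apply specNorm_sq_fin_two <;>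
    simp only [of_apply, cons_val', cons_val_zero, cons_val_one, empty_val', cons_val_fin_one]
  · rwa [hcol₀]
  · rwa [hcol₁]
  · rw [hcol₀, hcol₁, hgram, hgap, ← sq, div_pow, div_pow, hs]

theorem opt_scaling_mul_inv_equilibrated_general {n : ℕ}
    (L : Matrix (Fin (2*n)) (Fin 2) ℝ)
    (hLI : LinearIndependent ℝ ![fun i => L i 0, fun i => L i 1])
    (βj β : ℝ)
    (hβ : βj ≤ β) (hβj_pos : 0 < βj)
    (ε : ℝ) (hε : ε = 1 ∨ ε = -1)
    (cop fop ct ft : ℝ)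
    (hcop : cop = enorm2 (fun i => L i 1) / βj)
    (hfop : fop = -(∑ i, L i 0 * L i 1) / (enorm2 (fun i => L i 1) * βj))
    (hct : ct = enorm2 (fun i => L i 1) / β)
    (hft : ft = (-(∑ i, L i 0 * L i 1) + ε * Real.sqrt (β ^ 4 - βj ^ 4)) /
        (β * enorm2 (fun i => L i 1))) :
    (!![cop, fop; 0, cop⁻¹] : Matrix (Fin 2) (Fin 2) ℝ) *
        (!![ct, ft; 0, ct⁻¹] : Matrix (Fin 2) (Fin 2) ℝ)⁻¹ =
      !![β / βj, -ε * Real.sqrt (β ^ 4 - βj ^ 4) / (β * βj); 0, βj / β] ∧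
    specNorm ((!![cop, fop; 0, cop⁻¹] : Matrix (Fin 2) (Fin 2) ℝ) *
        (!![ct, ft; 0, ct⁻¹] : Matrix (Fin 2) (Fin 2) ℝ)⁻¹) ^ 2 =
      (β ^ 2 + Real.sqrt (β ^ 4 - βj ^ 4)) / βj ^ 2 := by
  have hβ_pos : 0 < β := hβj_pos.trans_le hβ
  have hw : 0 < enorm2 (fun i => L i 1) := enorm2_pos (by simpa using hLI.ne_zero 1)
  set s := √(β ^ 4 - βj ^ 4)
  have hs : s ^ 2 = β ^ 4 - βj ^ 4 := Real.sq_sqrt (sub_nonneg.2 (by gcongr))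
  have hε2 : ε ^ 2 = 1 := by rcases hε with rfl | rfl <;> norm_num
  have hprod : (!![cop, fop; 0, cop⁻¹] : Matrix (Fin 2) (Fin 2) ℝ) *
      (!![ct, ft; 0, ct⁻¹] : Matrix (Fin 2) (Fin 2) ℝ)⁻¹ =
      !![β / βj, -ε * s / (β * βj); 0, βj / β] := by
    rw [upperTriangular_mul_inv_fin_two (by rw [hct]; positivity), hcop, hfop, hct, hft]
    simp only [EmbeddingLike.apply_eq_iff_eq, Matrix.vecCons_inj, and_true, true_and]
    exact ⟨⟨by field_simp, by field_simp; ring⟩, by field_simp⟩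
  refine ⟨hprod, hprod ▸ specNorm_sq_upperTriangular_of_sq_eq hβj_pos.ne' hβ_pos.ne' ?_⟩
  rw [neg_mul, neg_sq, mul_pow, hε2, one_mul, hs]

theorem opt_scaling_mul_inv_equilibrated {n : ℕ}
    (L : Matrix (Fin (2*n)) (Fin 2) ℝ)
    (hLI : LinearIndependent ℝ ![fun i => L i 0, fun i => L i 1])
    (βj β : ℝ)
    (hβj : βj = Real.sqrt (Real.sqrt (Lᵀ * L).det))
    (hβ : βj ≤ β) (hβj_pos : 0 < βj)
    (ε : ℝ) (hε : ε = 1 ∨ ε = -1)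
    (cop fop ct ft : ℝ)
    (hcop : cop = enorm2 (fun i => L i 1) / βj)
    (hfop : fop = -(∑ i, L i 0 * L i 1) / (enorm2 (fun i => L i 1) * βj))
    (hct : ct = enorm2 (fun i => L i 1) / β)
    (hft : ft = (-(∑ i, L i 0 * L i 1) + ε * Real.sqrt (β ^ 4 - βj ^ 4)) /
        (β * enorm2 (fun i => L i 1))) :
    (!![cop, fop; 0, cop⁻¹] : Matrix (Fin 2) (Fin 2) ℝ) *
        (!![ct, ft; 0, ct⁻¹] : Matrix (Fin 2) (Fin 2) ℝ)⁻¹ =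
      !![β / βj, -ε * Real.sqrt (β ^ 4 - βj ^ 4) / (β * βj); 0, βj / β] ∧
    specNorm ((!![cop, fop; 0, cop⁻¹] : Matrix (Fin 2) (Fin 2) ℝ) *
        (!![ct, ft; 0, ct⁻¹] : Matrix (Fin 2) (Fin 2) ℝ)⁻¹) ^ 2 =
      (β ^ 2 + Real.sqrt (β ^ 4 - βj ^ 4)) / βj ^ 2 :=
  opt_scaling_mul_inv_equilibrated_general L hLI βj β hβ hβj_pos ε hε cop fop ct ft hcop hfop hct
    hft
end

section
/- Let R ∈ ℝ^{2n×2n} be an invertible upper triangular matrix partitioned into 2×2 blocks, L_j ∈ ℝ^{2n×2} the transpose of the j-th block row of R, β_j = (det(L_jᵀL_j))^{1/4}, β = max_j β_j, γ = min_j β_j. Let D̃_r = diag(D̃₁,…,D̃_n) be the block-diagonal scaling (each D̃_j upper triangular of the form [[c̃_jj, f̃_jj],[0, c̃_jj⁻¹]] with c̃_jj = ‖L_{j2}‖₂/β and f̃_jj = (−L_{j1}ᵀL_{j2} ± √(β⁴−β_j⁴))/(β‖L_{j2}‖₂)) making all 2n rows of D̃_r R have norm β. Then for every block-diagonal matrix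 D of this form, κ₂(D̃_r R) ≤ √(2n) · β√(β² + √(β⁴ − γ⁴)) / γ² · κ₂(D R). -/
open Matrix

def blockIdx {n : ℕ} (j : Fin n) (a : Fin 2) : Fin (2*n) :=
  ⟨2*(j : ℕ) + (a : ℕ), by have := j.isLt; have := a.isLt; omega⟩

/-- transpose of the `j`-th 2-row block of `R`. -/
def blockRowT {n : ℕ} (R : Matrix (Fin (2*n)) (Fin (2*n)) ℝ) (j : Fin n) :
    Matrix (Fin (2*n)) (Fin 2) ℝ := fun i a => R (blockIdx j a) i

/-- `D` is block diagonal with `j`-th diagonal block `[[c j, f j],[0, (c j)⁻¹]]`. -/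
def IsBlockScaling {n : ℕ} (D : Matrix (Fin (2*n)) (Fin (2*n)) ℝ)
    (c f : Fin n → ℝ) : Prop :=
  (∀ j, c j ≠ 0) ∧
  (∀ j : Fin n,
    D (blockIdx j 0) (blockIdx j 0) = c j ∧
    D (blockIdx j 0) (blockIdx j 1) = f j ∧
    D (blockIdx j 1) (blockIdx j 0) = 0 ∧
    D (blockIdx j 1) (blockIdx j 1) = (c j)⁻¹) ∧
  (∀ j j' : Fin n, ∀ a a' : Fin 2, j ≠ j' → D (blockIdx j a) (blockIdx j' a') = 0)


set_option maxHeartbeats 1000000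
namespace Aux

lemma enorm_nonneg {m : ℕ} (v : Fin m → ℝ) : 0 ≤ enorm2 v := Real.sqrt_nonneg _

lemma sumsq_nonneg {m : ℕ} (v : Fin m → ℝ) : 0 ≤ ∑ i, v i ^ 2 :=
  Finset.sum_nonneg fun i _ => sq_nonneg _

lemma enorm_sq {m : ℕ} (v : Fin m → ℝ) : enorm2 v ^ 2 = ∑ i, v i ^ 2 :=
  Real.sq_sqrt (sumsq_nonneg v)

lemma le_of_sq_le_sq {a b : ℝ} (hb : 0 ≤ b) (h : a ^ 2 ≤ b ^ 2) (ha : 0 ≤ a) : a ≤ b := by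
  nlinarith

lemma enorm_le_of_sq_le {m : ℕ} {v : Fin m → ℝ} {K : ℝ} (hK : 0 ≤ K)
    (h : ∑ i, v i ^ 2 ≤ K ^ 2) : enorm2 v ≤ K :=
  le_of_sq_le_sq hK (by rw [enorm_sq]; exact h) (enorm_nonneg v)

lemma enorm_eq_norm {m : ℕ} (v : Fin m → ℝ) :
    enorm2 v = ‖(WithLp.equiv 2 (Fin m → ℝ)).symm v‖ := by
  rw [EuclideanSpace.norm_eq, enorm2]
  congr 1
  exact Finset.sum_congr rfl fun i _ => by rw [Real.norm_eq_abs, sq_abs]; rfl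

lemma specNorm_nonneg {m n : ℕ} (A : Matrix (Fin m) (Fin n) ℝ) : 0 ≤ specNorm A :=
  norm_nonneg _

lemma enorm_mulVec_le {m n : ℕ} (A : Matrix (Fin m) (Fin n) ℝ) (x : Fin n → ℝ) :
    enorm2 (A.mulVec x) ≤ specNorm A * enorm2 x := by
  rw [enorm_eq_norm, enorm_eq_norm]
  exact ((Matrix.toEuclideanLin A).toContinuousLinearMap).le_opNorm (WithLp.toLp 2 x)

lemma specNorm_le_of_bound {m n : ℕ} (A : Matrix (Fin m) (Fin n) ℝ) {K : ℝ}
    (hK : 0 ≤ K) (h : ∀ x, enorm2 (A.mulVec x) ≤ K * enorm2 x) : specNorm A ≤ K := by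
  apply ContinuousLinearMap.opNorm_le_bound _ hK
  intro x
  have := h ((WithLp.equiv 2 (Fin n → ℝ)) x)
  rw [enorm_eq_norm, enorm_eq_norm] at this
  exact this

lemma specNorm_mul_le {m n k : ℕ} (A : Matrix (Fin m) (Fin n) ℝ)
    (B : Matrix (Fin n) (Fin k) ℝ) : specNorm (A * B) ≤ specNorm A * specNorm B := by
  apply specNorm_le_of_bound _ (mul_nonneg (specNorm_nonneg A) (specNorm_nonneg B))
  intro x
  rw [← Matrix.mulVec_mulVec]
  calc enorm2 (A.mulVec (B.mulVec x)) ≤ specNorm A * enorm2 (B.mulVec x) :=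
        enorm_mulVec_le A _
    _ ≤ specNorm A * (specNorm B * enorm2 x) :=
        mul_le_mul_of_nonneg_left (enorm_mulVec_le B x) (specNorm_nonneg A)
    _ = specNorm A * specNorm B * enorm2 x := by ring

lemma frob_nonneg {m n : ℕ} (A : Matrix (Fin m) (Fin n) ℝ) : 0 ≤ frob A :=
  Real.sqrt_nonneg _

lemma frob_sq {m n : ℕ} (A : Matrix (Fin m) (Fin n) ℝ) :
    frob A ^ 2 = ∑ i, ∑ j, A i j ^ 2 :=
  Real.sq_sqrt (Finset.sum_nonneg fun i _ => sumsq_nonneg _)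

lemma specNorm_le_frob {m n : ℕ} (A : Matrix (Fin m) (Fin n) ℝ) : specNorm A ≤ frob A := by
  apply specNorm_le_of_bound _ (frob_nonneg A)
  intro x
  apply enorm_le_of_sq_le (mul_nonneg (frob_nonneg A) (enorm_nonneg x))
  rw [mul_pow, frob_sq, enorm_sq]
  rw [Finset.sum_mul]
  apply Finset.sum_le_sum
  intro i _
  have := Finset.sum_mul_sq_le_sq_mul_sq Finset.univ (fun j => A i j) x
  calc (A.mulVec x i) ^ 2 = (∑ j, A i j * x j) ^ 2 := rfl
    _ ≤ (∑ j, A i j ^ 2) * ∑ j, x j ^ 2 := this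



/-- the equivalence `Fin (2*n) ≃ Fin 2 × Fin n`, `i ↦ (i % 2, i / 2)`. -/
def e2 {n : ℕ} : Fin (2*n) ≃ Fin 2 × Fin n where
  toFun i := (⟨(i : ℕ) % 2, by omega⟩, ⟨(i : ℕ) / 2, by have := i.isLt; omega⟩)
  invFun p := blockIdx p.2 p.1
  left_inv i := by
    apply Fin.ext
    simp only [blockIdx]
    omega
  right_inv p := by
    obtain ⟨a, j⟩ := p
    have ha := a.isLt
    ext
    · simp only [blockIdx]; omega
    · simp only [blockIdx]; have := j.isLt; omega

lemma e2_symm_apply {n : ℕ} (a : Fin 2) (j : Fin n) :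
    (e2.symm (a, j)) = blockIdx j a := rfl

lemma e2_blockIdx {n : ℕ} (j : Fin n) (a : Fin 2) : e2 (blockIdx j a) = (a, j) :=
  e2.apply_symm_apply (a, j)

lemma sum_decomp {n : ℕ} (g : Fin (2*n) → ℝ) :
    ∑ i, g i = ∑ j : Fin n, ∑ a : Fin 2, g (blockIdx j a) := by
  rw [← e2.symm.sum_comp g, Fintype.sum_prod_type]
  exact Finset.sum_comm

/-- block diagonal 2n×2n matrix from n blocks of size 2×2 -/
def bd {n : ℕ} (B : Fin n → Matrix (Fin 2) (Fin 2) ℝ) :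
    Matrix (Fin (2*n)) (Fin (2*n)) ℝ :=
  (blockDiagonal fun j => B j).submatrix e2 e2

lemma bd_apply {n : ℕ} (B : Fin n → Matrix (Fin 2) (Fin 2) ℝ) (j j' : Fin n) (a a' : Fin 2) :
    bd B (blockIdx j a) (blockIdx j' a') = if j = j' then B j a a' else 0 := by
  simp [bd, e2_blockIdx, blockDiagonal_apply']

lemma bd_mul {n : ℕ} (B B' : Fin n → Matrix (Fin 2) (Fin 2) ℝ) :
    bd B * bd B' = bd fun j => B j * B' j := by
  rw [bd, bd, submatrix_mul_equiv, ← blockDiagonal_mul, bd]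

lemma bd_one {n : ℕ} : bd (fun _ : Fin n => (1 : Matrix (Fin 2) (Fin 2) ℝ)) = 1 := by
  rw [bd, show (fun _ : Fin n => (1 : Matrix (Fin 2) (Fin 2) ℝ)) = 1 from rfl, blockDiagonal_one, submatrix_one_equiv]

lemma det_bd {n : ℕ} (B : Fin n → Matrix (Fin 2) (Fin 2) ℝ) :
    (bd B).det = ∏ j, (B j).det := by
  rw [bd, det_submatrix_equiv_self, det_blockDiagonal]

lemma isBlockScaling_eq_bd {n : ℕ} {D : Matrix (Fin (2*n)) (Fin (2*n)) ℝ}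
    {c f : Fin n → ℝ} (h : IsBlockScaling D c f) :
    D = bd fun j => !![c j, f j; 0, (c j)⁻¹] := by
  ext i k
  obtain ⟨a, j, rfl⟩ : ∃ a j, blockIdx j a = i := ⟨(e2 i).1, (e2 i).2, e2.symm_apply_apply i⟩
  obtain ⟨a', j', rfl⟩ : ∃ a j, blockIdx j a = k := ⟨(e2 k).1, (e2 k).2, e2.symm_apply_apply k⟩
  rw [bd_apply]
  by_cases hj : j = j'
  · subst hj
    simp only [if_pos rfl]
    obtain ⟨h1, h2, h3, h4⟩ := h.2.1 j
    fin_cases a <;> fin_cases a' <;> simpa using by assumption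
  · rw [if_neg hj]
    exact h.2.2 j j' a a' hj

lemma bd_norm_le {n : ℕ} (B : Fin n → Matrix (Fin 2) (Fin 2) ℝ) {K : ℝ} (hK : 0 ≤ K)
    (h : ∀ j y, enorm2 ((B j).mulVec y) ≤ K * enorm2 y) : specNorm (bd B) ≤ K := by
  apply specNorm_le_of_bound _ hK
  intro x
  apply enorm_le_of_sq_le (mul_nonneg hK (enorm_nonneg x))
  rw [sum_decomp (fun i => ((bd B).mulVec x i) ^ 2)]
  have key : ∀ j : Fin n, ∑ a : Fin 2, ((bd B).mulVec x (blockIdx j a)) ^ 2 ≤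
      K ^ 2 * ∑ a : Fin 2, (x (blockIdx j a)) ^ 2 := by
    intro j
    have hmv : ∀ a, (bd B).mulVec x (blockIdx j a) =
        (B j).mulVec (fun b => x (blockIdx j b)) a := by
      intro a
      show ∑ k, bd B (blockIdx j a) k * x k = ∑ b, B j a b * x (blockIdx j b)
      rw [sum_decomp (fun k => bd B (blockIdx j a) k * x k)]
      rw [Finset.sum_eq_single_of_mem j (Finset.mem_univ j)]
      · apply Finset.sum_congr rfl
        intro b _
        rw [bd_apply, if_pos rfl]
      · intro j' _ hj'
        apply Finset.sum_eq_zero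
        intro b _
        rw [bd_apply, if_neg (Ne.symm hj'), zero_mul]
    calc ∑ a : Fin 2, ((bd B).mulVec x (blockIdx j a)) ^ 2
        = ∑ a : Fin 2, ((B j).mulVec (fun b => x (blockIdx j b)) a) ^ 2 := by
          apply Finset.sum_congr rfl; intro a _; rw [hmv]
      _ = enorm2 ((B j).mulVec (fun b => x (blockIdx j b))) ^ 2 := (enorm_sq _).symm
      _ ≤ (K * enorm2 (fun b => x (blockIdx j b))) ^ 2 := by
          apply pow_le_pow_left₀ (enorm_nonneg _) (h j _)
      _ = K ^ 2 * ∑ a : Fin 2, (x (blockIdx j a)) ^ 2 := by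
          rw [mul_pow, enorm_sq]
  calc ∑ j : Fin n, ∑ a : Fin 2, ((bd B).mulVec x (blockIdx j a)) ^ 2
      ≤ ∑ j : Fin n, K ^ 2 * ∑ a : Fin 2, (x (blockIdx j a)) ^ 2 :=
        Finset.sum_le_sum fun j _ => key j
    _ = K ^ 2 * ∑ j : Fin n, ∑ a : Fin 2, (x (blockIdx j a)) ^ 2 := by
        rw [Finset.mul_sum]
    _ = K ^ 2 * ∑ i, x i ^ 2 := by rw [← sum_decomp (fun i => x i ^ 2)]
    _ = (K * enorm2 x) ^ 2 := by rw [mul_pow, enorm_sq]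

/-- the 2-row submatrix of A at block j has specNorm ≤ specNorm A -/
lemma rows_norm_le {n m : ℕ} (A : Matrix (Fin (2*n)) (Fin m) ℝ) (j : Fin n) :
    specNorm (Matrix.of fun (a : Fin 2) i => A (blockIdx j a) i) ≤ specNorm A := by
  apply specNorm_le_of_bound _ (by exact norm_nonneg _)
  intro x
  have h2 : ∀ a : Fin 2, (Matrix.of fun (a : Fin 2) i => A (blockIdx j a) i).mulVec x a
      = A.mulVec x (blockIdx j a) := fun a => rfl
  calc enorm2 ((Matrix.of fun (a : Fin 2) i => A (blockIdx j a) i).mulVec x)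
      ≤ enorm2 (A.mulVec x) := by
        apply enorm_le_of_sq_le (enorm_nonneg _)
        rw [enorm_sq]
        calc ∑ a : Fin 2, ((Matrix.of fun (a : Fin 2) i => A (blockIdx j a) i).mulVec x a) ^ 2
            = ∑ a : Fin 2, (A.mulVec x (blockIdx j a)) ^ 2 := by
              apply Finset.sum_congr rfl; intro a _; rw [h2]
          _ = (A.mulVec x (blockIdx j 0)) ^ 2 + (A.mulVec x (blockIdx j 1)) ^ 2 :=
              Fin.sum_univ_two _
          _ = ∑ i ∈ {blockIdx j 0, blockIdx j 1}, (A.mulVec x i) ^ 2 := by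
              rw [Finset.sum_pair (by apply Fin.ne_of_val_ne; simp [blockIdx])]
          _ ≤ ∑ i, (A.mulVec x i) ^ 2 :=
              Finset.sum_le_sum_of_subset_of_nonneg (Finset.subset_univ _)
                (fun i _ _ => sq_nonneg _)
    _ ≤ specNorm A * enorm2 x := enorm_mulVec_le A x


lemma le_abs_mul_ineq (W u y0 y1 : ℝ) (hW : 0 ≤ W) (huW : u ^ 2 ≤ W ^ 2) :
    -(2 * u * y0 * y1) ≤ W * (y0 ^ 2 + y1 ^ 2) := by
  rcases eq_or_lt_of_le hW with h | h
  · have hu : u = 0 := by nlinarith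
    rw [hu]; nlinarith [sq_nonneg y0, sq_nonneg y1]
  · nlinarith [sq_nonneg (W * y0 + u * y1), mul_nonneg (sub_nonneg.2 huW) (sq_nonneg y1)]

lemma scalar_main (b2 u d g W y0 y1 : ℝ) (hb2 : 0 ≤ b2) (hd : d = b2 ^ 2 - u ^ 2)
    (hdpos : 0 < d) (hg : 0 < g) (hgd : g ≤ d) (hW : 0 ≤ W) (huW : u ^ 2 ≤ W ^ 2) :
    b2 * (((b2 ^ 2 - u ^ 2)⁻¹ * (b2 * y0 - u * y1)) ^ 2 + ((b2 ^ 2 - u ^ 2)⁻¹ * (-(u * y0) + b2 * y1)) ^ 2) +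
      2 * ((b2 ^ 2 - u ^ 2)⁻¹ * (b2 * y0 - u * y1)) * ((b2 ^ 2 - u ^ 2)⁻¹ * (-(u * y0) + b2 * y1)) * u ≤
      (b2 + W) / g * (y0 ^ 2 + y1 ^ 2) := by
  subst hd
  have hd0 : b2 ^ 2 - u ^ 2 ≠ 0 := ne_of_gt hdpos
  have heq : b2 * (((b2 ^ 2 - u ^ 2)⁻¹ * (b2 * y0 - u * y1)) ^ 2 + ((b2 ^ 2 - u ^ 2)⁻¹ * (-(u * y0) + b2 * y1)) ^ 2) +
      2 * ((b2 ^ 2 - u ^ 2)⁻¹ * (b2 * y0 - u * y1)) * ((b2 ^ 2 - u ^ 2)⁻¹ * (-(u * y0) + b2 * y1)) * u =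
      (b2 * (y0 ^ 2 + y1 ^ 2) - 2 * u * y0 * y1) / (b2 ^ 2 - u ^ 2) := by
    field_simp
    ring
  rw [heq]
  have h1 := le_abs_mul_ineq W u y0 y1 hW huW
  have h2 : 0 ≤ (b2 + W) * (y0 ^ 2 + y1 ^ 2) := by positivity
  calc (b2 * (y0 ^ 2 + y1 ^ 2) - 2 * u * y0 * y1) / (b2 ^ 2 - u ^ 2)
      ≤ ((b2 + W) * (y0 ^ 2 + y1 ^ 2)) / g := by
        apply div_le_div₀ h2 (by nlinarith) hg hgd
    _ = (b2 + W) / g * (y0 ^ 2 + y1 ^ 2) := by ring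

lemma rowsum (p s bj4 b E nL ct ft : ℝ) (hnL : 0 < nL) (hb : 0 < b)
    (hbj4 : bj4 = p * nL ^ 2 - s ^ 2)
    (hE2 : E ^ 2 = b ^ 4 - bj4)
    (hct : ct = nL / b) (hft : ft = (-s + E) / (b * nL)) :
    ct ^ 2 * p + 2 * (ct * ft) * s + ft ^ 2 * nL ^ 2 = b ^ 2 ∧
    ct⁻¹ ^ 2 * nL ^ 2 = b ^ 2 ∧
    (ct * ct⁻¹) * s + (ft * ct⁻¹) * nL ^ 2 = E := by
  have hnL0 : nL ≠ 0 := ne_of_gt hnL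
  have hb0 : b ≠ 0 := ne_of_gt hb
  subst hct hft hbj4
  refine ⟨?_, ?_, ?_⟩
  · field_simp
    linear_combination hE2
  · field_simp
  · field_simp
    ring
end Aux

theorem nearly_optimal_block_row_scaling {n : ℕ} (hn : 0 < n)
    (R : Matrix (Fin (2*n)) (Fin (2*n)) ℝ)
    (hRinv : IsUnit R.det)
    (hRtri : ∀ i j : Fin (2*n), (j : ℕ) < (i : ℕ) → R i j = 0)
    (βj : Fin n → ℝ)
    (hβj : ∀ j, βj j = Real.sqrt (Real.sqrt ((blockRowT R j)ᵀ * blockRowT R j).det))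
    (β γ : ℝ)
    (hβub : ∀ j, βj j ≤ β) (hβmem : ∃ j, βj j = β)
    (hγlb : ∀ j, γ ≤ βj j) (hγmem : ∃ j, βj j = γ)
    (ε : Fin n → ℝ) (hε : ∀ j, ε j = 1 ∨ ε j = -1)
    (ct ft : Fin n → ℝ)
    (hct : ∀ j, ct j = enorm2 (fun i => blockRowT R j i 1) / β)
    (hft : ∀ j, ft j =
      (-(∑ i, blockRowT R j i 0 * blockRowT R j i 1)
          + ε j * Real.sqrt (β ^ 4 - βj j ^ 4)) /
        (β * enorm2 (fun i => blockRowT R j i 1)))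
    (Dr : Matrix (Fin (2*n)) (Fin (2*n)) ℝ)
    (hDr : IsBlockScaling Dr ct ft) :
    ∀ (D : Matrix (Fin (2*n)) (Fin (2*n)) ℝ) (c f : Fin n → ℝ),
      IsBlockScaling D c f →
      specNorm (Dr * R) * specNorm (Dr * R)⁻¹ ≤
        Real.sqrt (2 * n) *
          (β * Real.sqrt (β ^ 2 + Real.sqrt (β ^ 4 - γ ^ 4)) / γ ^ 2) *
          (specNorm (D * R) * specNorm (D * R)⁻¹) := by
  intro D c f hD
  -- R has nonzero diagonal
  have hdiag : ∀ i, R i i ≠ 0 := by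
    have htri : R.BlockTriangular id := fun i j h => hRtri i j h
    have hdet := Matrix.det_of_upperTriangular htri
    intro i hi
    exact hRinv.ne_zero (by rw [hdet]; exact Finset.prod_eq_zero (Finset.mem_univ i) hi)
  -- per-block facts about R
  have hblk : ∀ j : Fin n, 0 < ∑ i, R (blockIdx j 1) i ^ 2 ∧ 0 < βj j ∧
      βj j ^ 4 = (∑ i, R (blockIdx j 0) i ^ 2) * (∑ i, R (blockIdx j 1) i ^ 2)
        - (∑ i, R (blockIdx j 0) i * R (blockIdx j 1) i) ^ 2 := by
    intro j
    have hne : (blockIdx j 0) ≠ (blockIdx j 1) := by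
      apply Fin.ne_of_val_ne; simp [blockIdx]
    have h10 : R (blockIdx j 1) (blockIdx j 0) = 0 :=
      hRtri (blockIdx j 1) (blockIdx j 0) (by simp [blockIdx])
    have hq1 : R (blockIdx j 1) (blockIdx j 1) ^ 2 ≤ ∑ i, R (blockIdx j 1) i ^ 2 :=
      Finset.single_le_sum (f := fun i => R (blockIdx j 1) i ^ 2)
        (fun i _ => sq_nonneg _) (Finset.mem_univ _)
    have hd1 : R (blockIdx j 1) (blockIdx j 1) ≠ 0 := hdiag _
    have hqpos : 0 < ∑ i, R (blockIdx j 1) i ^ 2 :=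
      lt_of_lt_of_le (by positivity) hq1
    have hdet : 0 < (∑ i, R (blockIdx j 0) i ^ 2) * (∑ i, R (blockIdx j 1) i ^ 2)
        - (∑ i, R (blockIdx j 0) i * R (blockIdx j 1) i) ^ 2 := by
      have hs : ∑ i, R (blockIdx j 0) i * R (blockIdx j 1) i
          = ∑ i ∈ Finset.univ.erase (blockIdx j 0), R (blockIdx j 0) i * R (blockIdx j 1) i := by
        rw [Finset.sum_erase _ (by rw [h10, mul_zero])]
      have hCS := Finset.sum_mul_sq_le_sq_mul_sq (Finset.univ.erase (blockIdx j 0))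
          (fun i => R (blockIdx j 0) i) (fun i => R (blockIdx j 1) i)
      have hp : ∑ i, R (blockIdx j 0) i ^ 2
          = (∑ i ∈ Finset.univ.erase (blockIdx j 0), R (blockIdx j 0) i ^ 2)
            + R (blockIdx j 0) (blockIdx j 0) ^ 2 :=
        (Finset.sum_erase_add _ _ (Finset.mem_univ _)).symm
      have hqsub : ∑ i ∈ Finset.univ.erase (blockIdx j 0), R (blockIdx j 1) i ^ 2
          ≤ ∑ i, R (blockIdx j 1) i ^ 2 :=
        Finset.sum_le_sum_of_subset_of_nonneg (Finset.subset_univ _) (fun i _ _ => sq_nonneg _)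
      have hp'0 : (0:ℝ) ≤ ∑ i ∈ Finset.univ.erase (blockIdx j 0), R (blockIdx j 0) i ^ 2 :=
        Finset.sum_nonneg fun _ _ => sq_nonneg _
      have hq'0 : (0:ℝ) ≤ ∑ i ∈ Finset.univ.erase (blockIdx j 0), R (blockIdx j 1) i ^ 2 :=
        Finset.sum_nonneg fun _ _ => sq_nonneg _
      have hd0sq : 0 < R (blockIdx j 0) (blockIdx j 0) ^ 2 := by
        have := hdiag (blockIdx j 0); positivity
      rw [hs, hp]
      nlinarith [mul_le_mul_of_nonneg_left hqsub hp'0]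
    have hdetG : ((blockRowT R j)ᵀ * blockRowT R j).det =
        (∑ i, R (blockIdx j 0) i ^ 2) * (∑ i, R (blockIdx j 1) i ^ 2)
          - (∑ i, R (blockIdx j 0) i * R (blockIdx j 1) i) ^ 2 := by
      have e00 : ((blockRowT R j)ᵀ * blockRowT R j) 0 0 = ∑ i, R (blockIdx j 0) i ^ 2 := by
        rw [Matrix.mul_apply]
        exact Finset.sum_congr rfl fun i _ => by
          simp [blockRowT, Matrix.transpose_apply, pow_two]
      have e11 : ((blockRowT R j)ᵀ * blockRowT R j) 1 1 = ∑ i, R (blockIdx j 1) i ^ 2 := by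
        rw [Matrix.mul_apply]
        exact Finset.sum_congr rfl fun i _ => by
          simp [blockRowT, Matrix.transpose_apply, pow_two]
      have e01 : ((blockRowT R j)ᵀ * blockRowT R j) 0 1
          = ∑ i, R (blockIdx j 0) i * R (blockIdx j 1) i := by
        rw [Matrix.mul_apply]
        exact Finset.sum_congr rfl fun i _ => by
          simp [blockRowT, Matrix.transpose_apply]
      have e10 : ((blockRowT R j)ᵀ * blockRowT R j) 1 0
          = ∑ i, R (blockIdx j 0) i * R (blockIdx j 1) i := by
        rw [Matrix.mul_apply]
        exact Finset.sum_congr rfl fun i _ => by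
          simp [blockRowT, Matrix.transpose_apply, mul_comm]
      rw [Matrix.det_fin_two, e00, e11, e01, e10]
      ring
    have hdet' : 0 < ((blockRowT R j)ᵀ * blockRowT R j).det := by rw [hdetG]; exact hdet
    have hβjpos : 0 < βj j := by
      rw [hβj j]; exact Real.sqrt_pos.2 (Real.sqrt_pos.2 hdet')
    have hβ4 : βj j ^ 4 = ((blockRowT R j)ᵀ * blockRowT R j).det := by
      have h2 : βj j ^ 2 = Real.sqrt (((blockRowT R j)ᵀ * blockRowT R j).det) := by
        rw [hβj j]; exact Real.sq_sqrt (Real.sqrt_nonneg _)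
      calc βj j ^ 4 = (βj j ^ 2) ^ 2 := by ring
        _ = _ := by rw [h2, Real.sq_sqrt hdet'.le]
    exact ⟨hqpos, hβjpos, by rw [hβ4, hdetG]⟩
  have hβpos : 0 < β := by
    obtain ⟨j, hj⟩ := hβmem; rw [← hj]; exact (hblk j).2.1
  have hγpos : 0 < γ := by
    obtain ⟨j, hj⟩ := hγmem; rw [← hj]; exact (hblk j).2.1
  have hΔ : ∀ j, 0 ≤ β ^ 4 - βj j ^ 4 := by
    intro j
    have h1 : βj j ^ 4 ≤ β ^ 4 := pow_le_pow_left₀ (hblk j).2.1.le (hβub j) 4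
    linarith
  -- rows of (D' * R) for a block scaling D'
  have hrow : ∀ (D' : Matrix (Fin (2*n)) (Fin (2*n)) ℝ) (c' f' : Fin n → ℝ),
      IsBlockScaling D' c' f' → ∀ (j : Fin n) (i : Fin (2*n)),
      (D' * R) (blockIdx j 0) i = c' j * R (blockIdx j 0) i + f' j * R (blockIdx j 1) i ∧
      (D' * R) (blockIdx j 1) i = (c' j)⁻¹ * R (blockIdx j 1) i := by
    intro D' c' f' hD' j i
    have key : ∀ a : Fin 2, (D' * R) (blockIdx j a) i =
        D' (blockIdx j a) (blockIdx j 0) * R (blockIdx j 0) i +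
        D' (blockIdx j a) (blockIdx j 1) * R (blockIdx j 1) i := by
      intro a
      rw [Matrix.mul_apply, Aux.sum_decomp (fun k => D' (blockIdx j a) k * R k i)]
      rw [Finset.sum_eq_single_of_mem j (Finset.mem_univ j)]
      · rw [Fin.sum_univ_two]
      · intro j' _ hj'
        exact Finset.sum_eq_zero fun a' _ => by
          rw [hD'.2.2 j j' a a' (Ne.symm hj'), zero_mul]
    obtain ⟨h1, h2, h3, h4⟩ := hD'.2.1 j
    constructor
    · rw [key 0, h1, h2]
    · rw [key 1, h3, h4, zero_mul, zero_add]
  -- row norms of Dr * R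
  have hM : ∀ j : Fin n,
      (∑ i, ((Dr * R) (blockIdx j 0) i) ^ 2 = β ^ 2) ∧
      (∑ i, ((Dr * R) (blockIdx j 1) i) ^ 2 = β ^ 2) ∧
      ((∑ i, (Dr * R) (blockIdx j 0) i * (Dr * R) (blockIdx j 1) i) ^ 2 = β ^ 4 - βj j ^ 4) := by
    intro j
    obtain ⟨hqpos, hβjpos, hβ4⟩ := hblk j
    set nL := enorm2 (fun i => blockRowT R j i 1) with hnLdef
    have hnL2 : nL ^ 2 = ∑ i, R (blockIdx j 1) i ^ 2 := by
      rw [hnLdef, Aux.enorm_sq]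
      exact Finset.sum_congr rfl fun i _ => rfl
    have hnLpos : 0 < nL := by
      have h0 := Aux.enorm_nonneg (fun i => blockRowT R j i 1)
      rw [← hnLdef] at h0
      nlinarith
    have hctj : ct j = nL / β := hct j
    have hftj : ft j = (-(∑ i, R (blockIdx j 0) i * R (blockIdx j 1) i)
        + ε j * Real.sqrt (β ^ 4 - βj j ^ 4)) / (β * nL) := hft j
    have hE2 : (ε j * Real.sqrt (β ^ 4 - βj j ^ 4)) ^ 2 = β ^ 4 - βj j ^ 4 := by
      rcases hε j with h | h <;> rw [h] <;>
        simp [mul_pow, Real.sq_sqrt (hΔ j)]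
    obtain ⟨hr1, hr2, hr3⟩ := Aux.rowsum (∑ i, R (blockIdx j 0) i ^ 2)
      (∑ i, R (blockIdx j 0) i * R (blockIdx j 1) i) (βj j ^ 4) β
      (ε j * Real.sqrt (β ^ 4 - βj j ^ 4)) nL (ct j) (ft j) hnLpos hβpos
      (by rw [hβ4, hnL2]) hE2 hctj hftj
    have hexp0 : ∑ i, ((Dr * R) (blockIdx j 0) i) ^ 2 =
        (ct j) ^ 2 * (∑ i, R (blockIdx j 0) i ^ 2)
        + 2 * (ct j * ft j) * (∑ i, R (blockIdx j 0) i * R (blockIdx j 1) i)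
        + (ft j) ^ 2 * (∑ i, R (blockIdx j 1) i ^ 2) := by
      have h1 : ∀ i, ((Dr * R) (blockIdx j 0) i) ^ 2 =
          (ct j) ^ 2 * (R (blockIdx j 0) i ^ 2)
          + 2 * (ct j * ft j) * (R (blockIdx j 0) i * R (blockIdx j 1) i)
          + (ft j) ^ 2 * (R (blockIdx j 1) i ^ 2) := by
        intro i
        rw [(hrow Dr ct ft hDr j i).1]; ring
      rw [Finset.sum_congr rfl fun i _ => h1 i]
      rw [Finset.sum_add_distrib, Finset.sum_add_distrib, ← Finset.mul_sum, ← Finset.mul_sum,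
        ← Finset.mul_sum]
    have hexp1 : ∑ i, ((Dr * R) (blockIdx j 1) i) ^ 2 =
        (ct j)⁻¹ ^ 2 * (∑ i, R (blockIdx j 1) i ^ 2) := by
      have h1 : ∀ i, ((Dr * R) (blockIdx j 1) i) ^ 2 =
          (ct j)⁻¹ ^ 2 * (R (blockIdx j 1) i ^ 2) := by
        intro i; rw [(hrow Dr ct ft hDr j i).2]; ring
      rw [Finset.sum_congr rfl fun i _ => h1 i, ← Finset.mul_sum]
    have hexp01 : ∑ i, (Dr * R) (blockIdx j 0) i * (Dr * R) (blockIdx j 1) i =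
        (ct j * (ct j)⁻¹) * (∑ i, R (blockIdx j 0) i * R (blockIdx j 1) i)
        + (ft j * (ct j)⁻¹) * (∑ i, R (blockIdx j 1) i ^ 2) := by
      have h1 : ∀ i, (Dr * R) (blockIdx j 0) i * (Dr * R) (blockIdx j 1) i =
          (ct j * (ct j)⁻¹) * (R (blockIdx j 0) i * R (blockIdx j 1) i)
          + (ft j * (ct j)⁻¹) * (R (blockIdx j 1) i ^ 2) := by
        intro i
        rw [(hrow Dr ct ft hDr j i).1, (hrow Dr ct ft hDr j i).2]; ring
      rw [Finset.sum_congr rfl fun i _ => h1 i, Finset.sum_add_distrib,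
        ← Finset.mul_sum, ← Finset.mul_sum]
    refine ⟨?_, ?_, ?_⟩
    · rw [hexp0, ← hnL2]; exact hr1
    · rw [hexp1, ← hnL2]; exact hr2
    · rw [hexp01, ← hnL2]; rw [hr3]; exact hE2
  -- spectral norm bound for Dr * R via Frobenius
  have hfrob : specNorm (Dr * R) ≤ Real.sqrt (2 * n) * β := by
    have hfq : frob (Dr * R) ^ 2 = 2 * n * β ^ 2 := by
      rw [Aux.frob_sq, Aux.sum_decomp (fun i => ∑ k, ((Dr * R) i k) ^ 2)]
      have hrowsums : ∀ j : Fin n, ∑ a : Fin 2, ∑ k, ((Dr * R) (blockIdx j a) k) ^ 2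
          = 2 * β ^ 2 := by
        intro j
        rw [Fin.sum_univ_two, (hM j).1, (hM j).2.1]; ring
      rw [Finset.sum_congr rfl fun j _ => hrowsums j, Finset.sum_const, Finset.card_univ,
        Fintype.card_fin, nsmul_eq_mul]
      push_cast; ring
    have h2n : (0:ℝ) ≤ 2 * n := by positivity
    calc specNorm (Dr * R) ≤ frob (Dr * R) := Aux.specNorm_le_frob _
      _ ≤ Real.sqrt (2 * n) * β := by
        apply Aux.le_of_sq_le_sq (by positivity) _ (Aux.frob_nonneg _)
        rw [hfq, mul_pow, Real.sq_sqrt h2n]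
  -- block matrices
  set blkD : Fin n → Matrix (Fin 2) (Fin 2) ℝ := fun j => !![c j, f j; 0, (c j)⁻¹] with hblkD
  set blkDr : Fin n → Matrix (Fin 2) (Fin 2) ℝ := fun j => !![ct j, ft j; 0, (ct j)⁻¹]
    with hblkDr
  set blkDrI : Fin n → Matrix (Fin 2) (Fin 2) ℝ := fun j => !![(ct j)⁻¹, -(ft j); 0, ct j]
    with hblkDrI
  have hblkinv : ∀ j, blkDrI j * blkDr j = 1 := by
    intro j
    ext a b
    fin_cases a <;> fin_cases b <;>
      · simp [hblkDr, hblkDrI, Matrix.mul_apply, Fin.sum_univ_two,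
          inv_mul_cancel₀ (hDr.1 j), mul_inv_cancel₀ (hDr.1 j)]
        try ring
  have hblkinv' : ∀ j, blkDr j * blkDrI j = 1 := by
    intro j
    ext a b
    fin_cases a <;> fin_cases b <;>
      · simp [hblkDr, hblkDrI, Matrix.mul_apply, Fin.sum_univ_two,
          inv_mul_cancel₀ (hDr.1 j), mul_inv_cancel₀ (hDr.1 j)]
        try ring
  have hDeq : D = Aux.bd blkD := Aux.isBlockScaling_eq_bd hD
  have hDreq : Dr = Aux.bd blkDr := Aux.isBlockScaling_eq_bd hDr
  have hDrinv : Dr⁻¹ = Aux.bd blkDrI := by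
    apply Matrix.inv_eq_right_inv
    rw [hDreq, Aux.bd_mul,
      show (fun j => blkDr j * blkDrI j) = fun _ : Fin n => (1 : Matrix (Fin 2) (Fin 2) ℝ) from
        funext fun j => hblkinv' j]
    exact Aux.bd_one
  have hdetD : IsUnit D.det := by
    rw [hDeq, Aux.det_bd]
    have hd1 : ∀ j, (blkD j).det = 1 := fun j => by
      rw [hblkD, Matrix.det_fin_two_of, mul_inv_cancel₀ (hD.1 j)]; ring
    rw [Finset.prod_congr rfl fun j _ => hd1 j, Finset.prod_const_one]
    exact isUnit_one
  have hkeyinv : (Dr * R)⁻¹ = (D * R)⁻¹ * (D * Dr⁻¹) := by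
    rw [Matrix.mul_inv_rev, Matrix.mul_inv_rev, Matrix.mul_assoc,
      ← Matrix.mul_assoc D⁻¹ D Dr⁻¹, Matrix.nonsing_inv_mul D hdetD, Matrix.one_mul]
  have hEmat : D * Dr⁻¹ = Aux.bd fun j => blkD j * blkDrI j := by
    rw [hDeq, hDrinv, Aux.bd_mul]
  set Kγ := Real.sqrt (β ^ 2 + Real.sqrt (β ^ 4 - γ ^ 4)) / γ ^ 2 with hKγ
  have hW0 : 0 ≤ Real.sqrt (β ^ 4 - γ ^ 4) := Real.sqrt_nonneg _
  have hKγ0 : 0 ≤ Kγ := by rw [hKγ]; positivity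
  have hγβ : γ ≤ β := by
    obtain ⟨j0, hj0⟩ := hγmem
    rw [← hj0]; exact hβub j0
  have hβ4γ4 : 0 ≤ β ^ 4 - γ ^ 4 := by
    have := pow_le_pow_left₀ hγpos.le hγβ 4
    linarith
  have hEbound : specNorm (D * Dr⁻¹) ≤ specNorm (D * R) * Kγ := by
    rw [hEmat]
    apply Aux.bd_norm_le _ (mul_nonneg (Aux.specNorm_nonneg _) hKγ0)
    intro j y
    obtain ⟨hS00, hS11, hS01sq⟩ := hM j
    obtain ⟨hqpos, hβjpos, hβ4⟩ := hblk j
    set L2 : Matrix (Fin (2*n)) (Fin 2) ℝ := blockRowT R j with hL2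
    set M2 : Matrix (Fin 2) (Fin (2*n)) ℝ := Matrix.of fun a i => (Dr * R) (blockIdx j a) i
      with hM2
    set A2 : Matrix (Fin 2) (Fin (2*n)) ℝ := Matrix.of fun a i => (D * R) (blockIdx j a) i
      with hA2
    have hM2eq : M2 = blkDr j * L2ᵀ := by
      ext a i
      fin_cases a
      · show (Dr * R) (blockIdx j 0) i = _
        rw [(hrow Dr ct ft hDr j i).1, Matrix.mul_apply, Fin.sum_univ_two]
        simp [hblkDr, hL2, blockRowT]
      · show (Dr * R) (blockIdx j 1) i = _
        rw [(hrow Dr ct ft hDr j i).2, Matrix.mul_apply, Fin.sum_univ_two]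
        simp [hblkDr, hL2, blockRowT]
    have hA2eq : A2 = blkD j * L2ᵀ := by
      ext a i
      fin_cases a
      · show (D * R) (blockIdx j 0) i = _
        rw [(hrow D c f hD j i).1, Matrix.mul_apply, Fin.sum_univ_two]
        simp [hblkD, hL2, blockRowT]
      · show (D * R) (blockIdx j 1) i = _
        rw [(hrow D c f hD j i).2, Matrix.mul_apply, Fin.sum_univ_two]
        simp [hblkD, hL2, blockRowT]
    set S : Matrix (Fin 2) (Fin 2) ℝ := M2 * M2ᵀ with hS
    set u := ∑ i, (Dr * R) (blockIdx j 0) i * (Dr * R) (blockIdx j 1) i with hu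
    have hS00' : S 0 0 = β ^ 2 := by
      rw [hS, Matrix.mul_apply, ← hS00]
      exact Finset.sum_congr rfl fun i _ => by
        simp [hM2, Matrix.transpose_apply, pow_two]
    have hS11' : S 1 1 = β ^ 2 := by
      rw [hS, Matrix.mul_apply, ← hS11]
      exact Finset.sum_congr rfl fun i _ => by
        simp [hM2, Matrix.transpose_apply, pow_two]
    have hS01' : S 0 1 = u := by
      rw [hS, Matrix.mul_apply, hu]
      exact Finset.sum_congr rfl fun i _ => by
        simp [hM2, Matrix.transpose_apply]
    have hS10' : S 1 0 = u := by
      rw [hS, Matrix.mul_apply, hu]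
      exact Finset.sum_congr rfl fun i _ => by
        simp [hM2, Matrix.transpose_apply, mul_comm]
    have hd : S.det = (β ^ 2) ^ 2 - u ^ 2 := by
      rw [Matrix.det_fin_two, hS00', hS11', hS01', hS10']; ring
    have hdS : S.det = βj j ^ 4 := by
      rw [hd]
      linear_combination -hS01sq
    have hdSpos : 0 < S.det := by rw [hdS]; positivity
    set Si : Matrix (Fin 2) (Fin 2) ℝ := (S.det)⁻¹ • S.adjugate with hSi
    have hSSi : S * Si = 1 := by
      rw [hSi, Matrix.mul_smul, Matrix.mul_adjugate, smul_smul,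
        inv_mul_cancel₀ (ne_of_gt hdSpos), one_smul]
    have hC2eq : blkD j * blkDrI j = A2 * (M2ᵀ * Si) := by
      have hS' : S = blkDr j * (L2ᵀ * (L2 * (blkDr j)ᵀ)) := by
        rw [hS, hM2eq]
        simp only [Matrix.transpose_mul, Matrix.transpose_transpose, Matrix.mul_assoc]
      have key : L2ᵀ * (L2 * ((blkDr j)ᵀ * Si)) = blkDrI j := by
        calc L2ᵀ * (L2 * ((blkDr j)ᵀ * Si))
            = (blkDrI j * blkDr j) * (L2ᵀ * (L2 * ((blkDr j)ᵀ * Si))) := by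
              rw [hblkinv j, Matrix.one_mul]
          _ = blkDrI j * (S * Si) := by rw [hS']; simp only [Matrix.mul_assoc]
          _ = blkDrI j := by rw [hSSi, Matrix.mul_one]
      rw [hA2eq]
      calc blkD j * blkDrI j = blkD j * (L2ᵀ * (L2 * ((blkDr j)ᵀ * Si))) := by rw [key]
        _ = blkD j * L2ᵀ * (M2ᵀ * Si) := by
            rw [hM2eq]
            simp only [Matrix.transpose_mul, Matrix.transpose_transpose, Matrix.mul_assoc]
    rw [hC2eq, ← Matrix.mulVec_mulVec]
    set z := (M2ᵀ * Si).mulVec y with hz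
    have h1 : enorm2 (A2.mulVec z) ≤ specNorm (D * R) * enorm2 z := by
      calc enorm2 (A2.mulVec z) ≤ specNorm A2 * enorm2 z := Aux.enorm_mulVec_le _ _
        _ ≤ specNorm (D * R) * enorm2 z :=
          mul_le_mul_of_nonneg_right (by rw [hA2]; exact Aux.rows_norm_le (D * R) j)
            (Aux.enorm_nonneg _)
    have h2 : enorm2 z ≤ Kγ * enorm2 y := by
      have hz2 : z = M2ᵀ.mulVec (Si.mulVec y) := by rw [hz, ← Matrix.mulVec_mulVec]
      set w := Si.mulVec y with hw
      have hadj : S.adjugate = !![S 1 1, -(S 0 1); -(S 1 0), S 0 0] := Matrix.adjugate_fin_two S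
      have hw0 : w 0 = ((β ^ 2) ^ 2 - u ^ 2)⁻¹ * (β ^ 2 * y 0 - u * y 1) := by
        rw [hw, ← hd]
        simp [hSi, hadj, Matrix.mulVec, dotProduct, Fin.sum_univ_two,
          hS00', hS11', hS01', hS10', smul_eq_mul]
        ring
      have hw1 : w 1 = ((β ^ 2) ^ 2 - u ^ 2)⁻¹ * (-(u * y 0) + β ^ 2 * y 1) := by
        rw [hw, ← hd]
        simp [hSi, hadj, Matrix.mulVec, dotProduct, Fin.sum_univ_two,
          hS00', hS11', hS01', hS10', smul_eq_mul]
        ring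
      have hzi : ∀ i, z i = M2 0 i * w 0 + M2 1 i * w 1 := by
        intro i
        rw [hz2]
        show ∑ a, M2ᵀ i a * w a = _
        rw [Fin.sum_univ_two]
        rfl
      have hSa : S 0 0 = ∑ i, M2 0 i * M2 0 i := by
        rw [hS, Matrix.mul_apply]; rfl
      have hSb : S 1 1 = ∑ i, M2 1 i * M2 1 i := by
        rw [hS, Matrix.mul_apply]; rfl
      have hSc : S 0 1 = ∑ i, M2 0 i * M2 1 i := by
        rw [hS, Matrix.mul_apply]; rfl
      have hzsq : enorm2 z ^ 2 = β ^ 2 * (w 0 ^ 2 + w 1 ^ 2) + 2 * w 0 * w 1 * u := by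
        rw [Aux.enorm_sq]
        have expand : ∀ i, z i ^ 2 = w 0 ^ 2 * (M2 0 i * M2 0 i)
            + (2 * (w 0 * w 1)) * (M2 0 i * M2 1 i) + w 1 ^ 2 * (M2 1 i * M2 1 i) := fun i => by
          rw [hzi i]; ring
        rw [Finset.sum_congr rfl fun i _ => expand i, Finset.sum_add_distrib,
          Finset.sum_add_distrib, ← Finset.mul_sum, ← Finset.mul_sum, ← Finset.mul_sum,
          ← hSa, ← hSb, ← hSc, hS00', hS11', hS01']
        ring
      have huW : u ^ 2 ≤ Real.sqrt (β ^ 4 - γ ^ 4) ^ 2 := by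
        rw [Real.sq_sqrt hβ4γ4, hS01sq]
        have := pow_le_pow_left₀ hγpos.le (hγlb j) 4
        linarith
      have hgd : γ ^ 4 ≤ S.det := by
        rw [hdS]
        exact pow_le_pow_left₀ hγpos.le (hγlb j) 4
      have hmain := Aux.scalar_main (β ^ 2) u S.det (γ ^ 4) (Real.sqrt (β ^ 4 - γ ^ 4))
        (y 0) (y 1) (sq_nonneg β) hd hdSpos (by positivity) hgd hW0 huW
      have hKsq : (Kγ * enorm2 y) ^ 2
          = (β ^ 2 + Real.sqrt (β ^ 4 - γ ^ 4)) / γ ^ 4 * (y 0 ^ 2 + y 1 ^ 2) := by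
        rw [mul_pow, hKγ, div_pow, Real.sq_sqrt (by positivity), Aux.enorm_sq,
          Fin.sum_univ_two]
        ring
      apply Aux.le_of_sq_le_sq (mul_nonneg hKγ0 (Aux.enorm_nonneg _)) _ (Aux.enorm_nonneg _)
      rw [hzsq, hw0, hw1, hKsq]
      calc β ^ 2 * ((((β ^ 2) ^ 2 - u ^ 2)⁻¹ * (β ^ 2 * y 0 - u * y 1)) ^ 2
            + (((β ^ 2) ^ 2 - u ^ 2)⁻¹ * (-(u * y 0) + β ^ 2 * y 1)) ^ 2)
          + 2 * (((β ^ 2) ^ 2 - u ^ 2)⁻¹ * (β ^ 2 * y 0 - u * y 1))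
            * (((β ^ 2) ^ 2 - u ^ 2)⁻¹ * (-(u * y 0) + β ^ 2 * y 1)) * u
          = β ^ 2 * ((((β ^ 2) ^ 2 - u ^ 2)⁻¹ * (β ^ 2 * y 0 - u * y 1)) ^ 2
            + (((β ^ 2) ^ 2 - u ^ 2)⁻¹ * (-(u * y 0) + β ^ 2 * y 1)) ^ 2)
          + 2 * (((β ^ 2) ^ 2 - u ^ 2)⁻¹ * (β ^ 2 * y 0 - u * y 1))
            * (((β ^ 2) ^ 2 - u ^ 2)⁻¹ * (-(u * y 0) + β ^ 2 * y 1)) * u := rfl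
        _ ≤ (β ^ 2 + Real.sqrt (β ^ 4 - γ ^ 4)) / γ ^ 4 * (y 0 ^ 2 + y 1 ^ 2) := hmain
    calc enorm2 (A2.mulVec z) ≤ specNorm (D * R) * enorm2 z := h1
      _ ≤ specNorm (D * R) * (Kγ * enorm2 y) :=
        mul_le_mul_of_nonneg_left h2 (Aux.specNorm_nonneg _)
      _ = specNorm (D * R) * Kγ * enorm2 y := by ring
  have hN2 : specNorm (Dr * R)⁻¹ ≤ specNorm (D * R)⁻¹ * (specNorm (D * R) * Kγ) := by
    rw [hkeyinv]
    calc specNorm ((D * R)⁻¹ * (D * Dr⁻¹))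
        ≤ specNorm (D * R)⁻¹ * specNorm (D * Dr⁻¹) := Aux.specNorm_mul_le _ _
      _ ≤ _ := mul_le_mul_of_nonneg_left hEbound (Aux.specNorm_nonneg _)
  calc specNorm (Dr * R) * specNorm (Dr * R)⁻¹
      ≤ (Real.sqrt (2 * n) * β) * specNorm (Dr * R)⁻¹ :=
        mul_le_mul_of_nonneg_right hfrob (Aux.specNorm_nonneg _)
    _ ≤ (Real.sqrt (2 * n) * β) * (specNorm (D * R)⁻¹ * (specNorm (D * R) * Kγ)) :=
        mul_le_mul_of_nonneg_left hN2 (by positivity)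
    _ = Real.sqrt (2 * n) *
          (β * Real.sqrt (β ^ 2 + Real.sqrt (β ^ 4 - γ ^ 4)) / γ ^ 2) *
          (specNorm (D * R) * specNorm (D * R)⁻¹) := by
        rw [hKγ]; ring
end
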